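/- Let α ∈ c₀ be a nonincreasing sequence of nonnegative reals with α₁ ≤ 1 and let ω ∈ (0,1). The following are equivalent: (1) the principal Calkin space ⟨α⟩ is stable; (2) α⊗α ∈ ⟨α⟩; (3) there exist a positive integer r and a constant C > 0 such that M̃ₙ^{(ω)}(α) ≤ C · K̃_{n+r}^{(ω)}(α) for every integer n ≥ 0. -/

import Mathlib

open scoped BigOperators

noncomputable section

/-- The space of complex null sequences `c₀`. -/
def c0 : Set (ℕ → ℂ) := {α | Filter.Tendsto α Filter.atTop (nhds 0)}

/-- `rearrSum α n` is the supremum of `∑_{i ∈ F} |α i|` over finite sets `F ⊆ ℕ` with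
`|F| = n`; for a null sequence it equals `α*₁ + ⋯ + α*ₙ` where `α*` is the decreasing
rearrangement of `(|α_n|)`. -/
def rearrSum (α : ℕ → ℂ) (n : ℕ) : ℝ :=
  sSup ((fun F : Finset ℕ => ∑ i ∈ F, ‖α i‖) '' {F | F.card = n})

/-- The decreasing rearrangement of a null sequence, 0-indexed:
`rearr α n = α*_{n+1}`. -/
def rearr (α : ℕ → ℂ) (n : ℕ) : ℝ := rearrSum α (n + 1) - rearrSum α n

/-- A Calkin space: a linear subspace of `c₀` containing every null sequence whose
decreasing rearrangement is dominated termwise by that of one of its members. -/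
def IsCalkinSpace (I : Set (ℕ → ℂ)) : Prop :=
  I ⊆ c0 ∧ (0 : ℕ → ℂ) ∈ I ∧
  (∀ α ∈ I, ∀ β ∈ I, α + β ∈ I) ∧
  (∀ (c : ℂ), ∀ α ∈ I, c • α ∈ I) ∧
  (∀ α ∈ I, ∀ β ∈ c0, (∀ n, rearr β n ≤ rearr α n) → β ∈ I)

/-- `tensorSum α β n` is the supremum of `∑_{(i,j) ∈ F} |α i| |β j|` over finite
`F ⊆ ℕ × ℕ` with `|F| = n`; it equals `(α⊗β)₁ + ⋯ + (α⊗β)ₙ`. -/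
def tensorSum (α β : ℕ → ℂ) (n : ℕ) : ℝ :=
  sSup ((fun F : Finset (ℕ × ℕ) => ∑ p ∈ F, ‖α p.1‖ * ‖β p.2‖) '' {F | F.card = n})

/-- The tensor sequence `α⊗β`: the decreasing rearrangement of the double sequence
`(|α_m β_n|)_{m,n}`, 0-indexed: `tensorSeq α β n = (α⊗β)_{n+1}`. -/
def tensorSeq (α β : ℕ → ℂ) (n : ℕ) : ℝ := tensorSum α β (n + 1) - tensorSum α β n

/-- Embedding of real sequences into complex sequences. -/
def toC (f : ℕ → ℝ) : ℕ → ℂ := fun n => (f n : ℂ)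

/-- The tensor product `𝔦⊗𝔧` of two Calkin spaces: the smallest Calkin space
containing `α⊗β` for all `α ∈ 𝔦`, `β ∈ 𝔧`. -/
def calkinTensor (I J : Set (ℕ → ℂ)) : Set (ℕ → ℂ) :=
  ⋂₀ {K | IsCalkinSpace K ∧ ∀ α ∈ I, ∀ β ∈ J, toC (tensorSeq α β) ∈ K}

/-- A Calkin space `𝔦` is stable if `𝔦⊗𝔦 = 𝔦`. -/
def IsStableCalkin (I : Set (ℕ → ℂ)) : Prop := IsCalkinSpace I ∧ calkinTensor I I = I

/-- The principal Calkin space `⟨α⟩` generated by `α`: the smallest Calkin space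
containing `α`. -/
def principalCalkin (α : ℕ → ℂ) : Set (ℕ → ℂ) := ⋂₀ {K | IsCalkinSpace K ∧ α ∈ K}

/-- `Kw ω α n = #{m : ω^{n+1} < α m ≤ ω^n}` (the sequence `α` being 0-indexed). -/
def Kw (ω : ℝ) (α : ℕ → ℝ) (n : ℕ) : ℕ :=
  Set.ncard {m : ℕ | ω ^ (n + 1) < α m ∧ α m ≤ ω ^ n}

/-- `K̃ₙ = Σ_{i=0}^n Kᵢ`. -/
def Ktil (ω : ℝ) (α : ℕ → ℝ) (n : ℕ) : ℕ := ∑ i ∈ Finset.range (n + 1), Kw ω α i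

/-- `Mₙ = Σ_{i+j=n} Kᵢ Kⱼ`. -/
def Mw (ω : ℝ) (α : ℕ → ℝ) (n : ℕ) : ℕ :=
  ∑ i ∈ Finset.range (n + 1), Kw ω α i * Kw ω α (n - i)

/-- `M̃ₙ = Σ_{i=0}^n Mᵢ`. -/
def Mtil (ω : ℝ) (α : ℕ → ℝ) (n : ℕ) : ℕ := ∑ i ∈ Finset.range (n + 1), Mw ω α i

/-!
For a nonnegative function `d` vanishing at infinity, the decreasing rearrangement is read off the
distribution function: `d*ₙ ≤ s` iff `#{d > s} ≤ n` for `s > 0`; a greedy enumeration of the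
support realises `d*`. Hence `⟨α⟩` consists of the null sequences with
`β* ≤ C α(⌊·/m⌋)`, the dilations of `α` being reached by splitting into even and odd parts.
Constants and dilations pass through `⊗`, and `α⊗α ≥ α₀ α`, so `⟨α⟩` is stable iff
`α⊗α ≤ C α(⌊·/m⌋)`. Grouping `α` into the blocks `(ω^{i+1}, ω^i]` gives
`K̃ₙ = #{α > ω^{n+1}}` and `#{α⊗α > ωⁿ} ≤ M̃ₙ ≤ #{α⊗α > ω^{n+2}}`, which turns this
domination into `M̃ₙ ≤ C K̃_{n+r}`, with `ω^r` absorbing the constant.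
-/

open Filter Topology

section Rearrangement

variable {ι κ : Type*}

def topSum (d : ι → ℝ) (n : ℕ) : ℝ :=
  sSup ((fun F : Finset ι => ∑ i ∈ F, d i) '' {F | F.card = n})

def decRearr (d : ι → ℝ) (n : ℕ) : ℝ := topSum d (n + 1) - topSum d n

lemma rearr_eq_decRearr (β : ℕ → ℂ) : rearr β = decRearr (fun k => ‖β k‖) := rfl

lemma tensorSeq_eq_decRearr (β γ : ℕ → ℂ) :
    tensorSeq β γ = decRearr (fun p : ℕ × ℕ => ‖β p.1‖ * ‖γ p.2‖) := rfl

lemma Antitone.sum_le_sum_range {f : ℕ → ℝ} (hf : Antitone f) (J : Finset ℕ) :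
    ∑ j ∈ J, f j ≤ ∑ k ∈ Finset.range J.card, f k := by
  induction J using Finset.induction_on_max with
  | empty => simp
  | insert a s ha ih =>
    have has : a ∉ s := fun h => lt_irrefl a (ha a h)
    have hcard : s.card ≤ a := by
      simpa using Finset.card_le_card fun x hx => Finset.mem_range.2 (ha x hx)
    rw [Finset.sum_insert has, Finset.card_insert_of_notMem has, Finset.sum_range_succ]
    linarith [hf hcard]

structure Sorting (d : ι → ℝ) where
  toFun : ℕ → ι
  injective : Function.Injective toFun
  mem_range : ∀ i, d i ≠ 0 → i ∈ Set.range toFun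
  antitone : Antitone (d ∘ toFun)

namespace Sorting

variable {d : ι → ℝ}

lemma topSum_eq (S : Sorting d) (hd0 : 0 ≤ d) (n : ℕ) :
    topSum d n = ∑ k ∈ Finset.range n, d (S.toFun k) := by
  classical
  refine IsGreatest.csSup_eq
    ⟨⟨(Finset.range n).map ⟨S.toFun, S.injective⟩, by simp, by simp⟩, ?_⟩
  rintro _ ⟨F, hF, rfl⟩
  have hinj : Set.InjOn S.toFun (S.toFun ⁻¹' F) := S.injective.injOn
  have hcard : (F.preimage S.toFun hinj).card ≤ n :=
    hF ▸ Finset.card_le_card_of_injOn S.toFun (fun k hk => Finset.mem_preimage.1 hk)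
      S.injective.injOn
  calc ∑ i ∈ F, d i = ∑ k ∈ F.preimage S.toFun hinj, d (S.toFun k) :=
        (Finset.sum_preimage _ _ hinj d fun i _ hi => not_not.1 fun h => hi (S.mem_range i h)).symm
    _ ≤ ∑ k ∈ Finset.range (F.preimage S.toFun hinj).card, d (S.toFun k) :=
        S.antitone.sum_le_sum_range _
    _ ≤ ∑ k ∈ Finset.range n, d (S.toFun k) :=
        Finset.sum_le_sum_of_subset_of_nonneg (Finset.range_subset_range.2 hcard)
          fun k _ _ => hd0 _

lemma decRearr_eq (S : Sorting d) (hd0 : 0 ≤ d) (n : ℕ) : decRearr d n = d (S.toFun n) := by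
  rw [decRearr, S.topSum_eq hd0, S.topSum_eq hd0, Finset.sum_range_succ, add_sub_cancel_left]

lemma image_superlevel (S : Sorting d) {s : ℝ} (hs : 0 ≤ s) :
    S.toFun '' {n | s < d (S.toFun n)} = {i | s < d i} := by
  ext i
  refine ⟨?_, fun hi => ?_⟩
  · rintro ⟨n, hn, rfl⟩
    exact hn
  · obtain ⟨n, rfl⟩ := S.mem_range i (hs.trans_lt hi).ne'
    exact ⟨n, hi, rfl⟩

def ofAntitone {u : ℕ → ℝ} (hu : Antitone u) : Sorting u :=
  ⟨id, Function.injective_id, fun k _ => ⟨k, rfl⟩, hu⟩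

def constMul (S : Sorting d) {c : ℝ} (hc : 0 ≤ c) : Sorting (fun i => c * d i) :=
  ⟨S.toFun, S.injective, fun i hi => S.mem_range i (right_ne_zero_of_mul hi),
    fun _ _ hmn => mul_le_mul_of_nonneg_left (S.antitone hmn) hc⟩

def extend (S : Sorting d) {e : ι → κ} (he : Function.Injective e) :
    Sorting (Function.extend e d 0) where
  toFun := e ∘ S.toFun
  injective := he.comp S.injective
  mem_range k hk := by
    by_cases hke : ∃ i, e i = k
    · obtain ⟨i, rfl⟩ := hke
      rw [he.extend_apply] at hk
      obtain ⟨n, rfl⟩ := S.mem_range i hk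
      exact ⟨n, rfl⟩
    · exact absurd (Function.extend_apply' _ _ _ hke) hk
  antitone m n hmn := by
    simp only [Function.comp_apply, he.extend_apply]
    exact S.antitone hmn

end Sorting

section Greedy

variable [DecidableEq ι]

def greedyChain (next : Finset ι → ι) : ℕ → Finset ι
  | 0 => ∅
  | n + 1 => insert (next (greedyChain next n)) (greedyChain next n)

lemma mem_greedyChain {next : Finset ι → ι} {i : ι} {n : ℕ} :
    i ∈ greedyChain next n ↔ ∃ m < n, next (greedyChain next m) = i := by
  induction n with
  | zero => simp [greedyChain]
  | succ n ih =>
    simp only [greedyChain, Finset.mem_insert, ih]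
    constructor
    · rintro (rfl | ⟨m, hm, rfl⟩)
      exacts [⟨n, n.lt_succ_self, rfl⟩, ⟨m, by omega, rfl⟩]
    · rintro ⟨m, hm, rfl⟩
      rcases (Nat.lt_succ_iff_lt_or_eq.1 hm) with hm | rfl
      exacts [Or.inr ⟨m, hm, rfl⟩, Or.inl rfl]

end Greedy

variable {d : ι → ℝ}

lemma finite_superlevel (hd : Tendsto d cofinite (𝓝 0)) {s : ℝ} (hs : 0 < s) :
    {i | s < d i}.Finite :=
  (eventually_cofinite.1 (hd.eventually (gt_mem_nhds hs))).subset fun _ hi => not_lt.2 hi.le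

lemma exists_max_outside [Infinite ι] (hd0 : 0 ≤ d) (hd : Tendsto d cofinite (𝓝 0))
    (U : Finset ι) : ∃ i ∉ U, ∀ j ∉ U, d j ≤ d i := by
  by_cases hpos : ∃ j ∉ U, 0 < d j
  · obtain ⟨j₀, hj₀U, hj₀⟩ := hpos
    have hfin : ({j | d j₀ / 2 < d j} \ U).Finite := (finite_superlevel hd (half_pos hj₀)).sdiff
    obtain ⟨i, ⟨-, hiU⟩, hmax⟩ :=
      Set.exists_max_image _ d hfin ⟨j₀, half_lt_self hj₀, hj₀U⟩
    refine ⟨i, hiU, fun j hjU => ?_⟩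
    by_cases hj : d j₀ / 2 < d j
    · exact hmax j ⟨hj, hjU⟩
    · linarith [not_lt.1 hj, hmax j₀ ⟨half_lt_self hj₀, hj₀U⟩]
  · push Not at hpos
    obtain ⟨i, hi⟩ := Infinite.exists_notMem_finset U
    exact ⟨i, hi, fun j hj => (hpos j hj).trans (hd0 i)⟩

/-- Greedily picking a maximal remaining value sorts `d`; the finiteness of its superlevel sets
makes every point of the support picked eventually. -/
lemma exists_sorting [Infinite ι] (hd0 : 0 ≤ d) (hd : Tendsto d cofinite (𝓝 0)) :
    Nonempty (Sorting d) := by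
  classical
  choose next hnext_out hnext_max using exists_max_outside hd0 hd
  set π : ℕ → ι := fun n => next (greedyChain next n)
  have hchain_mono : Monotone (greedyChain next) :=
    monotone_nat_of_le_succ fun n => Finset.subset_insert _ _
  have hinj : Function.Injective π := by
    intro m n hmn
    by_contra hne
    wlog hlt : m < n generalizing m n
    · exact this hmn.symm (Ne.symm hne) (by omega)
    have hmem : π m ∈ greedyChain next n := mem_greedyChain.2 ⟨m, hlt, rfl⟩
    exact hnext_out _ (hmn ▸ hmem)
  refine ⟨⟨π, hinj, fun i hi => ?_, antitone_nat_of_succ_le fun n => hnext_max _ _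
    fun h => hnext_out _ (hchain_mono n.le_succ h)⟩⟩
  by_contra hiπ
  have hle : ∀ n, d i ≤ d (π n) := fun n => hnext_max _ i fun h => by
    obtain ⟨m, -, rfl⟩ := mem_greedyChain.1 h
    exact hiπ ⟨m, rfl⟩
  have hpos : 0 < d i := (hd0 i).lt_of_ne' hi
  refine Set.infinite_range_of_injective hinj ((finite_superlevel hd (half_pos hpos)).subset ?_)
  rintro _ ⟨n, rfl⟩
  exact (half_lt_self hpos).trans_le (hle n)

end Rearrangement

lemma Antitone.lt_iff_lt_ncard {u : ℕ → ℝ} (hu : Antitone u) {s : ℝ}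
    (hfin : {m | s < u m}.Finite) (n : ℕ) : s < u n ↔ n < {m | s < u m}.ncard := by
  constructor
  · intro hn
    have hsub : Set.Iic n ⊆ {m | s < u m} := fun m hm => hn.trans_le (hu hm)
    simpa using Set.ncard_le_ncard hsub hfin
  · intro hn
    by_contra hle
    have hsub : {m | s < u m} ⊆ Set.Iio n := fun m hm =>
      lt_of_not_ge fun hnm => hle (hm.trans_le (hu hnm))
    have := Set.ncard_le_ncard hsub (Set.finite_Iio n)
    rw [Set.ncard_Iio_nat] at this
    omega

section DecRearr

variable {ι κ : Type*} [Infinite ι] {d : ι → ℝ}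

lemma decRearr_nonneg (hd0 : 0 ≤ d) (hd : Tendsto d cofinite (𝓝 0)) (n : ℕ) :
    0 ≤ decRearr d n := by
  obtain ⟨S⟩ := exists_sorting hd0 hd
  exact S.decRearr_eq hd0 n ▸ hd0 _

lemma antitone_decRearr (hd0 : 0 ≤ d) (hd : Tendsto d cofinite (𝓝 0)) :
    Antitone (decRearr d) := by
  obtain ⟨S⟩ := exists_sorting hd0 hd
  rw [funext (S.decRearr_eq hd0)]
  exact S.antitone

lemma tendsto_decRearr (hd0 : 0 ≤ d) (hd : Tendsto d cofinite (𝓝 0)) :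
    Tendsto (decRearr d) atTop (𝓝 0) := by
  obtain ⟨S⟩ := exists_sorting hd0 hd
  rw [funext (S.decRearr_eq hd0), ← Nat.cofinite_eq_atTop]
  exact hd.comp S.injective.tendsto_cofinite

lemma ncard_superlevel_decRearr (hd0 : 0 ≤ d) (hd : Tendsto d cofinite (𝓝 0)) {s : ℝ}
    (hs : 0 ≤ s) : {n | s < decRearr d n}.ncard = {i | s < d i}.ncard := by
  obtain ⟨S⟩ := exists_sorting hd0 hd
  simp_rw [S.decRearr_eq hd0]
  rw [← S.image_superlevel hs, Set.ncard_image_of_injective _ S.injective]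

lemma decRearr_le_iff (hd0 : 0 ≤ d) (hd : Tendsto d cofinite (𝓝 0)) {s : ℝ} (hs : 0 < s)
    (n : ℕ) : decRearr d n ≤ s ↔ {i | s < d i}.ncard ≤ n := by
  have hfin : {m | s < decRearr d m}.Finite := by
    refine finite_superlevel ?_ hs
    rw [Nat.cofinite_eq_atTop]
    exact tendsto_decRearr hd0 hd
  rw [← ncard_superlevel_decRearr hd0 hd hs.le, ← not_lt,
    (antitone_decRearr hd0 hd).lt_iff_lt_ncard hfin, not_lt]

lemma decRearr_le_of_forall_ncard_le (hd0 : 0 ≤ d) (hd : Tendsto d cofinite (𝓝 0)) {x : ℝ}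
    (hx : 0 ≤ x) {n : ℕ} (h : ∀ s, x < s → {i | s < d i}.ncard ≤ n) : decRearr d n ≤ x :=
  le_of_forall_gt_imp_ge_of_dense fun s hs =>
    (decRearr_le_iff hd0 hd (hx.trans_lt hs) n).2 (h s hs)

lemma decRearr_le_decRearr_of_ncard_le [Infinite κ] {e : κ → ℝ} (hd0 : 0 ≤ d)
    (hd : Tendsto d cofinite (𝓝 0)) (he0 : 0 ≤ e) (he : Tendsto e cofinite (𝓝 0))
    (h : ∀ s, 0 < s → {i | s < d i}.ncard ≤ {j | s < e j}.ncard) (n : ℕ) :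
    decRearr d n ≤ decRearr e n :=
  decRearr_le_of_forall_ncard_le hd0 hd (decRearr_nonneg he0 he n) fun s hs =>
    have hs0 := (decRearr_nonneg he0 he n).trans_lt hs
    (h s hs0).trans ((decRearr_le_iff he0 he hs0 n).1 hs.le)

lemma decRearr_of_antitone {u : ℕ → ℝ} (hu : Antitone u) (hu0 : 0 ≤ u) : decRearr u = u :=
  funext ((Sorting.ofAntitone hu).decRearr_eq hu0)

lemma decRearr_const_mul (hd0 : 0 ≤ d) (hd : Tendsto d cofinite (𝓝 0)) {c : ℝ} (hc : 0 ≤ c)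
    (n : ℕ) : decRearr (fun i => c * d i) n = c * decRearr d n := by
  obtain ⟨S⟩ := exists_sorting hd0 hd
  rw [(S.constMul hc).decRearr_eq fun i => mul_nonneg hc (hd0 i), S.decRearr_eq hd0]
  rfl

lemma decRearr_extend {e : ι → κ} (he : Function.Injective e) (hd0 : 0 ≤ d)
    (hd : Tendsto d cofinite (𝓝 0)) : decRearr (Function.extend e d 0) = decRearr d := by
  obtain ⟨S⟩ := exists_sorting hd0 hd
  have hext0 : 0 ≤ Function.extend e d 0 := Function.extend_nonneg hd0 le_rfl
  funext n
  rw [(S.extend he).decRearr_eq hext0, S.decRearr_eq hd0]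
  exact he.extend_apply d 0 _

lemma decRearr_add_le {e f : ι → ℝ} (hd0 : 0 ≤ d) (hd : Tendsto d cofinite (𝓝 0))
    (he0 : 0 ≤ e) (he : Tendsto e cofinite (𝓝 0)) (hf0 : 0 ≤ f)
    (hf : Tendsto f cofinite (𝓝 0)) (hle : ∀ i, d i ≤ e i + f i) (m n : ℕ) :
    decRearr d (m + n) ≤ decRearr e m + decRearr f n := by
  refine le_of_forall_pos_lt_add fun ε hε => ?_
  set a := decRearr e m + ε / 3 with ha_def
  set b := decRearr f n + ε / 3 with hb_def
  have ha : 0 < a := by linarith [decRearr_nonneg he0 he m]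
  have hb : 0 < b := by linarith [decRearr_nonneg hf0 hf n]
  have hsub : {i | a + b < d i} ⊆ {i | a < e i} ∪ {i | b < f i} := fun i hi => by
    by_contra h
    simp only [Set.mem_union, Set.mem_ofPred_eq, not_or, not_lt] at h
    linarith [hle i, hi.out]
  have hcount : {i | a + b < d i}.ncard ≤ m + n :=
    calc {i | a + b < d i}.ncard ≤ ({i | a < e i} ∪ {i | b < f i}).ncard :=
          Set.ncard_le_ncard hsub ((finite_superlevel he ha).union (finite_superlevel hf hb))
      _ ≤ {i | a < e i}.ncard + {i | b < f i}.ncard := Set.ncard_union_le _ _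
      _ ≤ m + n := add_le_add ((decRearr_le_iff he0 he ha m).1 (by linarith))
          ((decRearr_le_iff hf0 hf hb n).1 (by linarith))
  linarith [(decRearr_le_iff hd0 hd (add_pos ha hb) _).2 hcount]

end DecRearr

section NullSequences

variable {β γ : ℕ → ℂ} {f : ℕ → ℝ}

lemma toC_mem_c0 (hf : Tendsto f atTop (𝓝 0)) : toC f ∈ c0 :=
  (Complex.continuous_ofReal.tendsto' 0 0 Complex.ofReal_zero).comp hf

lemma add_mem_c0 (hβ : β ∈ c0) (hγ : γ ∈ c0) : β + γ ∈ c0 := by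
  have h : Tendsto (β + γ) atTop (𝓝 (0 + 0)) := hβ.add hγ
  rwa [add_zero] at h

lemma smul_mem_c0 (c : ℂ) (hβ : β ∈ c0) : c • β ∈ c0 := by
  have h : Tendsto (c • β) atTop (𝓝 (c • 0)) := hβ.const_smul c
  rwa [smul_zero] at h

lemma tendsto_norm_of_mem_c0 (hβ : β ∈ c0) :
    Tendsto (fun k => ‖β k‖) cofinite (𝓝 0) := by
  rw [Nat.cofinite_eq_atTop]
  exact tendsto_zero_iff_norm_tendsto_zero.1 hβ

lemma norm_toC (hf0 : 0 ≤ f) (k : ℕ) : ‖toC f k‖ = f k := by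
  simp [toC, abs_of_nonneg (hf0 k)]

lemma rearr_nonneg (hβ : β ∈ c0) (n : ℕ) : 0 ≤ rearr β n :=
  decRearr_nonneg (fun _ => norm_nonneg _) (tendsto_norm_of_mem_c0 hβ) n

lemma rearr_toC (hf : Antitone f) (hf0 : 0 ≤ f) : rearr (toC f) = f := by
  simp only [rearr_eq_decRearr, norm_toC hf0]
  exact decRearr_of_antitone hf hf0

lemma rearr_smul (hβ : β ∈ c0) (c : ℂ) (n : ℕ) :
    rearr (c • β) n = ‖c‖ * rearr β n := by
  simp only [rearr_eq_decRearr, Pi.smul_apply, norm_smul]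
  exact decRearr_const_mul (fun _ => norm_nonneg _) (tendsto_norm_of_mem_c0 hβ) (norm_nonneg c) n

lemma rearr_add_le (hβ : β ∈ c0) (hγ : γ ∈ c0) (m n : ℕ) :
    rearr (β + γ) (m + n) ≤ rearr β m + rearr γ n :=
  decRearr_add_le (fun _ => norm_nonneg _) (tendsto_norm_of_mem_c0 (add_mem_c0 hβ hγ))
    (fun _ => norm_nonneg _) (tendsto_norm_of_mem_c0 hβ) (fun _ => norm_nonneg _)
    (tendsto_norm_of_mem_c0 hγ) (fun k => norm_add_le (β k) (γ k)) m n

end NullSequences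

section PrincipalCalkin

def DominatedByDilation (g f : ℕ → ℝ) : Prop :=
  ∃ C > 0, ∃ m > 0, ∀ n, g n ≤ C * f (n / m)

namespace DominatedByDilation

variable {g h f : ℕ → ℝ}

lemma refl (f : ℕ → ℝ) : DominatedByDilation f f :=
  ⟨1, one_pos, 1, one_pos, fun n => by rw [Nat.div_one, one_mul]⟩

lemma of_le (hgh : ∀ n, g n ≤ h n) (hhf : DominatedByDilation h f) : DominatedByDilation g f :=
  let ⟨C, hC, m, hm, hle⟩ := hhf
  ⟨C, hC, m, hm, fun n => (hgh n).trans (hle n)⟩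

lemma trans (hgh : DominatedByDilation g h) (hhf : DominatedByDilation h f) :
    DominatedByDilation g f := by
  obtain ⟨C₁, hC₁, m₁, hm₁, h₁⟩ := hgh
  obtain ⟨C₂, hC₂, m₂, hm₂, h₂⟩ := hhf
  refine ⟨C₁ * C₂, mul_pos hC₁ hC₂, m₁ * m₂, Nat.mul_pos hm₁ hm₂, fun n => ?_⟩
  calc g n ≤ C₁ * h (n / m₁) := h₁ n
    _ ≤ C₁ * (C₂ * f (n / m₁ / m₂)) := mul_le_mul_of_nonneg_left (h₂ _) hC₁.le
    _ = C₁ * C₂ * f (n / (m₁ * m₂)) := by rw [Nat.div_div_eq_div_mul, mul_assoc]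

lemma const_mul (hf0 : 0 ≤ f) (hgf : DominatedByDilation g f) {c : ℝ} (hc : 0 ≤ c) :
    DominatedByDilation (fun n => c * g n) f := by
  obtain ⟨C, hC, m, hm, hle⟩ := hgf
  refine ⟨(c + 1) * C, by positivity, m, hm, fun n => ?_⟩
  have hCf : 0 ≤ C * f (n / m) := mul_nonneg hC.le (hf0 _)
  show c * g n ≤ (c + 1) * C * f (n / m)
  nlinarith [mul_le_mul_of_nonneg_left (hle n) hc]

lemma of_le_add {g₁ g₂ : ℕ → ℝ} (hf : Antitone f) (h₁ : DominatedByDilation g₁ f)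
    (h₂ : DominatedByDilation g₂ f) (hg : ∀ i j, g (i + j) ≤ g₁ i + g₂ j) :
    DominatedByDilation g f := by
  obtain ⟨C₁, hC₁, m₁, hm₁, h₁⟩ := h₁
  obtain ⟨C₂, hC₂, m₂, hm₂, h₂⟩ := h₂
  refine ⟨C₁ + C₂, add_pos hC₁ hC₂, 2 * m₁ * m₂, by positivity, fun n => ?_⟩
  have hdiv₁ : n / (2 * m₁ * m₂) ≤ n / 2 / m₁ := by
    rw [Nat.div_div_eq_div_mul]
    exact Nat.div_le_div_left (Nat.le_mul_of_pos_right _ hm₂) (by positivity)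
  have hdiv₂ : n / (2 * m₁ * m₂) ≤ (n - n / 2) / m₂ := by
    calc n / (2 * m₁ * m₂) ≤ n / 2 / m₂ := by
          rw [Nat.div_div_eq_div_mul, mul_right_comm]
          exact Nat.div_le_div_left (Nat.le_mul_of_pos_right _ hm₁) (by positivity)
      _ ≤ (n - n / 2) / m₂ := Nat.div_le_div_right (by omega)
  calc g n = g (n / 2 + (n - n / 2)) := by rw [Nat.add_sub_cancel' (Nat.div_le_self n 2)]
    _ ≤ C₁ * f (n / 2 / m₁) + C₂ * f ((n - n / 2) / m₂) :=
        (hg _ _).trans (add_le_add (h₁ _) (h₂ _))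
    _ ≤ C₁ * f (n / (2 * m₁ * m₂)) + C₂ * f (n / (2 * m₁ * m₂)) :=
        add_le_add (mul_le_mul_of_nonneg_left (hf hdiv₁) hC₁.le)
          (mul_le_mul_of_nonneg_left (hf hdiv₂) hC₂.le)
    _ = (C₁ + C₂) * f (n / (2 * m₁ * m₂)) := by ring

end DominatedByDilation

def dilationIdeal (f : ℕ → ℝ) : Set (ℕ → ℂ) :=
  {β | β ∈ c0 ∧ DominatedByDilation (rearr β) f}

variable {f : ℕ → ℝ}

lemma isCalkinSpace_dilationIdeal (hf : Antitone f) (hf0 : 0 ≤ f) :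
    IsCalkinSpace (dilationIdeal f) := by
  have hc0 : (0 : ℕ → ℂ) ∈ c0 := tendsto_const_nhds
  refine ⟨fun β hβ => hβ.1, ⟨hc0, ?_⟩, fun β hβ γ hγ => ?_, fun c β hβ => ?_,
    fun β hβ γ hγ hle => ⟨hγ, hβ.2.of_le hle⟩⟩
  · refine ⟨1, one_pos, 1, one_pos, fun n => ?_⟩
    have h := rearr_smul hc0 0 n
    rw [smul_zero, norm_zero, zero_mul] at h
    rw [h]
    exact mul_nonneg zero_le_one (hf0 _)
  · exact ⟨add_mem_c0 hβ.1 hγ.1, hβ.2.of_le_add hf hγ.2 (rearr_add_le hβ.1 hγ.1)⟩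
  · refine ⟨smul_mem_c0 c hβ.1, ?_⟩
    rw [show rearr (c • β) = fun n => ‖c‖ * rearr β n from funext (rearr_smul hβ.1 c)]
    exact hβ.2.const_mul hf0 (norm_nonneg c)

lemma toC_mem_dilationIdeal_iff {u : ℕ → ℝ} (hu : Antitone u) (hu0 : 0 ≤ u)
    (huc : Tendsto u atTop (𝓝 0)) : toC u ∈ dilationIdeal f ↔ DominatedByDilation u f := by
  rw [dilationIdeal, Set.mem_ofPred_eq, rearr_toC hu hu0]
  exact and_iff_right (toC_mem_c0 huc)

lemma toC_mem_dilationIdeal (hf : Antitone f) (hf0 : 0 ≤ f) (hfc : Tendsto f atTop (𝓝 0)) :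
    toC f ∈ dilationIdeal f :=
  (toC_mem_dilationIdeal_iff hf hf0 hfc).2 (.refl f)

/-- `f ⌊·/2⌋` is the sum of its even and odd parts, each a zero-padded copy of `f`. -/
lemma toC_dilate_two_mem {K : Set (ℕ → ℂ)} (hK : IsCalkinSpace K) (hf : Antitone f)
    (hf0 : 0 ≤ f) (hfc : Tendsto f atTop (𝓝 0)) (hfK : toC f ∈ K) :
    toC (fun n => f (n / 2)) ∈ K := by
  have hfc' : Tendsto f cofinite (𝓝 0) := Nat.cofinite_eq_atTop ▸ hfc
  have hpad0 : ∀ (e : ℕ → ℕ) k, 0 ≤ Function.extend e f 0 k := fun _ =>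
    Function.extend_nonneg hf0 le_rfl
  have hpad_mem : ∀ e : ℕ → ℕ, Function.Injective e →
      (∀ k, Function.extend e f 0 k ≤ f (k / 2)) → toC (Function.extend e f 0) ∈ K := by
    intro e he hle
    refine hK.2.2.2.2 _ hfK _ (toC_mem_c0 (squeeze_zero (hpad0 e ·) hle
      (hfc.comp (Nat.tendsto_div_const_atTop two_ne_zero)))) fun n => ?_
    rw [rearr_toC hf hf0, rearr_eq_decRearr]
    simp only [norm_toC (hpad0 e ·)]
    rw [decRearr_extend he hf0 hfc', decRearr_of_antitone hf hf0]
  have hinj₀ : Function.Injective fun n => 2 * n := fun a b h => by simpa using h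
  have hinj₁ : Function.Injective fun n => 2 * n + 1 := fun a b h => by simpa using h
  have hsplit : ∀ k, Function.extend (fun n => 2 * n) f 0 k +
      Function.extend (fun n => 2 * n + 1) f 0 k = f (k / 2) := fun k => by
    obtain ⟨j, rfl | rfl⟩ := Nat.even_or_odd' k
    · rw [hinj₀.extend_apply, Function.extend_apply' _ _ _ (by rintro ⟨a, ha⟩; omega)]
      simp
    · rw [hinj₁.extend_apply, Function.extend_apply' _ _ _ (by rintro ⟨a, ha⟩; omega)]
      simp [Nat.mul_add_div two_pos]
  have hsum := hK.2.2.1 _ (hpad_mem _ hinj₀ fun k => by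
      linarith [hsplit k, hpad0 (fun n => 2 * n + 1) k]) _
    (hpad_mem _ hinj₁ fun k => by
      linarith [hsplit k, hpad0 (fun n => 2 * n) k])
  convert hsum using 1
  funext k
  simp [toC, ← hsplit k]

lemma toC_dilate_two_pow_mem {K : Set (ℕ → ℂ)} (hK : IsCalkinSpace K) (hf : Antitone f)
    (hf0 : 0 ≤ f) (hfc : Tendsto f atTop (𝓝 0)) (hfK : toC f ∈ K) (k : ℕ) :
    toC (fun n => f (n / 2 ^ k)) ∈ K := by
  induction k with
  | zero => simpa using hfK
  | succ k ih =>
    have h := toC_dilate_two_mem hK (fun a b hab => hf (Nat.div_le_div_right hab))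
      (fun n => hf0 (n / 2 ^ k))
      (hfc.comp (Nat.tendsto_div_const_atTop (by positivity))) ih
    simpa only [Nat.div_div_eq_div_mul, ← pow_succ'] using h

lemma dilationIdeal_subset {K : Set (ℕ → ℂ)} (hK : IsCalkinSpace K) (hf : Antitone f)
    (hf0 : 0 ≤ f) (hfc : Tendsto f atTop (𝓝 0)) (hfK : toC f ∈ K) : dilationIdeal f ⊆ K := by
  rintro β ⟨hβ, C, hC, m, hm, hle⟩
  set g : ℕ → ℝ := fun n => f (n / 2 ^ m)
  have hg : Antitone g := fun a b hab => hf (Nat.div_le_div_right hab)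
  have hgc : toC g ∈ c0 := toC_mem_c0 (hfc.comp (Nat.tendsto_div_const_atTop (by positivity)))
  refine hK.2.2.2.2 _ (hK.2.2.2.1 (C : ℂ) _ (toC_dilate_two_pow_mem hK hf hf0 hfc hfK m)) _ hβ
    fun n => ?_
  rw [rearr_smul hgc, rearr_toC hg fun n => hf0 (n / 2 ^ m), Complex.norm_real,
    Real.norm_of_nonneg hC.le]
  exact (hle n).trans (mul_le_mul_of_nonneg_left
    (hf (Nat.div_le_div_left Nat.lt_two_pow_self.le hm)) hC.le)

lemma principalCalkin_subset {β : ℕ → ℂ} {K : Set (ℕ → ℂ)} (hK : IsCalkinSpace K)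
    (hβ : β ∈ K) : principalCalkin β ⊆ K :=
  Set.sInter_subset_of_mem ⟨hK, hβ⟩

lemma principalCalkin_eq_dilationIdeal (hf : Antitone f) (hf0 : 0 ≤ f)
    (hfc : Tendsto f atTop (𝓝 0)) : principalCalkin (toC f) = dilationIdeal f :=
  (principalCalkin_subset (isCalkinSpace_dilationIdeal hf hf0)
    (toC_mem_dilationIdeal hf hf0 hfc)).antisymm
    fun _ hβ _ hK => dilationIdeal_subset hK.1 hf hf0 hfc hK.2 hβ

end PrincipalCalkin

section Tensor

lemma tendsto_mul_cofinite {ι κ : Type*} {d : ι → ℝ} {e : κ → ℝ}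
    (hd : Tendsto d cofinite (𝓝 0)) (he : Tendsto e cofinite (𝓝 0)) :
    Tendsto (fun p : ι × κ => d p.1 * e p.2) cofinite (𝓝 0) := by
  obtain ⟨Bd, hBd⟩ := hd.norm.bddAbove_range_of_cofinite
  obtain ⟨Be, hBe⟩ := he.norm.bddAbove_range_of_cofinite
  rw [← coprod_cofinite, Filter.coprod, tendsto_sup]
  exact ⟨(hd.comp tendsto_comap).zero_mul_isBoundedUnder_le
      (isBoundedUnder_of ⟨Be, fun p => hBe ⟨p.2, rfl⟩⟩),
    isBoundedUnder_le_mul_tendsto_zero (isBoundedUnder_of ⟨Bd, fun p => hBd ⟨p.1, rfl⟩⟩)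
      (he.comp tendsto_comap)⟩

lemma ncard_superlevel_mul_decRearr {ι κ : Type*} [Infinite ι] [Infinite κ] {d : ι → ℝ}
    {e : κ → ℝ} (hd0 : 0 ≤ d) (hd : Tendsto d cofinite (𝓝 0)) (he0 : 0 ≤ e)
    (he : Tendsto e cofinite (𝓝 0)) {s : ℝ} (hs : 0 ≤ s) :
    {p : ι × κ | s < d p.1 * e p.2}.ncard =
      {p : ℕ × ℕ | s < decRearr d p.1 * decRearr e p.2}.ncard := by
  obtain ⟨S⟩ := exists_sorting hd0 hd
  obtain ⟨T⟩ := exists_sorting he0 he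
  simp_rw [S.decRearr_eq hd0, T.decRearr_eq he0]
  rw [← Set.ncard_image_of_injective _ (S.injective.prodMap T.injective)]
  congr 1
  ext ⟨i, j⟩
  refine ⟨fun h => ?_, ?_⟩
  · have hpos : 0 < d i * e j := hs.trans_lt h
    obtain ⟨a, rfl⟩ := S.mem_range i (left_ne_zero_of_mul hpos.ne')
    obtain ⟨b, rfl⟩ := T.mem_range j (right_ne_zero_of_mul hpos.ne')
    exact ⟨(a, b), h, rfl⟩
  · rintro ⟨⟨a, b⟩, h, hab⟩
    simp only [Prod.map, Prod.mk.injEq] at hab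
    obtain ⟨rfl, rfl⟩ := hab
    exact h

lemma finite_and_ncard_le_preimage_prodMap_div {S : Set (ℕ × ℕ)} (hS : S.Finite) {m₁ m₂ : ℕ}
    (hm₁ : 0 < m₁) (hm₂ : 0 < m₂) :
    (Prod.map (· / m₁) (· / m₂) ⁻¹' S).Finite ∧
      (Prod.map (· / m₁) (· / m₂) ⁻¹' S).ncard ≤ m₁ * m₂ * S.ncard := by
  have hT : (S ×ˢ (Set.Iio m₁ ×ˢ Set.Iio m₂)).Finite :=
    hS.prod ((Set.finite_Iio m₁).prod (Set.finite_Iio m₂))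
  have hsub : Prod.map (· / m₁) (· / m₂) ⁻¹' S ⊆
      (fun q : (ℕ × ℕ) × ℕ × ℕ => (q.1.1 * m₁ + q.2.1, q.1.2 * m₂ + q.2.2)) ''
        (S ×ˢ (Set.Iio m₁ ×ˢ Set.Iio m₂)) := fun p hp =>
    ⟨((p.1 / m₁, p.2 / m₂), (p.1 % m₁, p.2 % m₂)),
      ⟨hp, Nat.mod_lt _ hm₁, Nat.mod_lt _ hm₂⟩, by simp [Nat.div_add_mod']⟩
  refine ⟨(hT.image _).subset hsub, ?_⟩
  calc (Prod.map (· / m₁) (· / m₂) ⁻¹' S).ncard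
      ≤ (S ×ˢ (Set.Iio m₁ ×ˢ Set.Iio m₂)).ncard :=
        (Set.ncard_le_ncard hsub (hT.image _)).trans (Set.ncard_image_le hT)
    _ = m₁ * m₂ * S.ncard := by simp only [Set.ncard_prod, Set.ncard_Iio_nat]; ring

variable {β γ : ℕ → ℂ} {f g : ℕ → ℝ}

lemma tendsto_norm_mul_norm (hβ : β ∈ c0) (hγ : γ ∈ c0) :
    Tendsto (fun p : ℕ × ℕ => ‖β p.1‖ * ‖γ p.2‖) cofinite (𝓝 0) :=
  tendsto_mul_cofinite (tendsto_norm_of_mem_c0 hβ) (tendsto_norm_of_mem_c0 hγ)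

lemma tensorSeq_nonneg (hβ : β ∈ c0) (hγ : γ ∈ c0) (n : ℕ) : 0 ≤ tensorSeq β γ n :=
  decRearr_nonneg (fun _ => by positivity) (tendsto_norm_mul_norm hβ hγ) n

lemma antitone_tensorSeq (hβ : β ∈ c0) (hγ : γ ∈ c0) : Antitone (tensorSeq β γ) :=
  antitone_decRearr (fun _ => by positivity) (tendsto_norm_mul_norm hβ hγ)

lemma tendsto_tensorSeq (hβ : β ∈ c0) (hγ : γ ∈ c0) :
    Tendsto (tensorSeq β γ) atTop (𝓝 0) :=
  tendsto_decRearr (fun _ => by positivity) (tendsto_norm_mul_norm hβ hγ)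

lemma tensorSeq_toC (hf0 : 0 ≤ f) (hg0 : 0 ≤ g) :
    tensorSeq (toC f) (toC g) = decRearr (fun p : ℕ × ℕ => f p.1 * g p.2) := by
  simp only [tensorSeq_eq_decRearr, norm_toC hf0, norm_toC hg0]

/-- The tensor product is monotone and homogeneous in each factor, and `⌊·/m₁⌋ ⊗ ⌊·/m₂⌋`
repeats every product `m₁ m₂` times. -/
lemma DominatedByDilation.tensorSeq (hβ : β ∈ c0) (hγ : γ ∈ c0) (hf0 : 0 ≤ f)
    (hfc : Tendsto f atTop (𝓝 0)) (hg0 : 0 ≤ g) (hgc : Tendsto g atTop (𝓝 0))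
    (hβf : DominatedByDilation (rearr β) f) (hγg : DominatedByDilation (rearr γ) g) :
    DominatedByDilation (tensorSeq β γ) (tensorSeq (toC f) (toC g)) := by
  obtain ⟨C₁, hC₁, m₁, hm₁, h₁⟩ := hβf
  obtain ⟨C₂, hC₂, m₂, hm₂, h₂⟩ := hγg
  set P : ℕ × ℕ → ℝ := fun p => f p.1 * g p.2
  have hP0 : 0 ≤ P := fun p => mul_nonneg (hf0 _) (hg0 _)
  have hP : Tendsto P cofinite (𝓝 0) :=
    tendsto_mul_cofinite (Nat.cofinite_eq_atTop ▸ hfc) (Nat.cofinite_eq_atTop ▸ hgc)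
  have hC : 0 < C₁ * C₂ := mul_pos hC₁ hC₂
  refine ⟨C₁ * C₂, hC, m₁ * m₂, Nat.mul_pos hm₁ hm₂, fun n => ?_⟩
  rw [tensorSeq_eq_decRearr, tensorSeq_toC hf0 hg0]
  have hx0 : 0 ≤ C₁ * C₂ * decRearr P (n / (m₁ * m₂)) :=
    mul_nonneg hC.le (decRearr_nonneg hP0 hP _)
  refine decRearr_le_of_forall_ncard_le (fun _ => by positivity) (tendsto_norm_mul_norm hβ hγ)
    hx0 fun s hs => ?_
  set s' := s / (C₁ * C₂)
  have hs' : decRearr P (n / (m₁ * m₂)) < s' := by rw [lt_div_iff₀ hC]; linarith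
  have hs'0 : 0 < s' := (decRearr_nonneg hP0 hP _).trans_lt hs'
  obtain ⟨hfin, hcard⟩ :=
    finite_and_ncard_le_preimage_prodMap_div (finite_superlevel hP hs'0) hm₁ hm₂
  have hsub : {p : ℕ × ℕ | s < rearr β p.1 * rearr γ p.2} ⊆
      Prod.map (· / m₁) (· / m₂) ⁻¹' {p | s' < P p} := fun p hp => by
    show s / (C₁ * C₂) < f (p.1 / m₁) * g (p.2 / m₂)
    rw [div_lt_iff₀ hC]
    calc s < rearr β p.1 * rearr γ p.2 := hp
      _ ≤ C₁ * f (p.1 / m₁) * (C₂ * g (p.2 / m₂)) :=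
        mul_le_mul (h₁ _) (h₂ _) (rearr_nonneg hγ _) (mul_nonneg hC₁.le (hf0 _))
      _ = _ := by ring
  calc {p : ℕ × ℕ | s < ‖β p.1‖ * ‖γ p.2‖}.ncard
      = {p : ℕ × ℕ | s < rearr β p.1 * rearr γ p.2}.ncard :=
        ncard_superlevel_mul_decRearr (fun _ => norm_nonneg _) (tendsto_norm_of_mem_c0 hβ)
          (fun _ => norm_nonneg _) (tendsto_norm_of_mem_c0 hγ) (hx0.trans hs.le)
    _ ≤ m₁ * m₂ * {p | s' < P p}.ncard := (Set.ncard_le_ncard hsub hfin).trans hcard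
    _ ≤ m₁ * m₂ * (n / (m₁ * m₂)) :=
        Nat.mul_le_mul_left _ ((decRearr_le_iff hP0 hP hs'0 _).1 hs'.le)
    _ ≤ n := Nat.mul_div_le n (m₁ * m₂)

end Tensor

section Stability

variable {f : ℕ → ℝ}

lemma mul_le_tensorSeq {g : ℕ → ℝ} (hf : Antitone f) (hf0 : 0 ≤ f)
    (hfc : Tendsto f atTop (𝓝 0)) (hg0 : 0 ≤ g) (hgc : Tendsto g atTop (𝓝 0)) (n : ℕ) :
    f n * g 0 ≤ tensorSeq (toC f) (toC g) n := by
  have hfc' : Tendsto f cofinite (𝓝 0) := Nat.cofinite_eq_atTop ▸ hfc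
  have hgc' : Tendsto g cofinite (𝓝 0) := Nat.cofinite_eq_atTop ▸ hgc
  have hd0 : 0 ≤ fun k => f k * g 0 := fun k => mul_nonneg (hf0 k) (hg0 0)
  have hP := tendsto_mul_cofinite hfc' hgc'
  rw [tensorSeq_toC hf0 hg0]
  calc f n * g 0 = decRearr (fun k => f k * g 0) n := by
        rw [decRearr_of_antitone (fun a b hab => mul_le_mul_of_nonneg_right (hf hab) (hg0 0)) hd0]
    _ ≤ _ := decRearr_le_decRearr_of_ncard_le hd0 (by simpa using hfc'.mul_const (g 0))
        (fun p => mul_nonneg (hf0 _) (hg0 _)) hP (fun s hs => Set.ncard_le_ncard_of_injOn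
          (fun k => (k, 0)) (fun _ hk => hk) (fun _ _ _ _ h => congrArg Prod.fst h)
          (finite_superlevel hP hs)) n

lemma dominatedByDilation_tensorSeq_self (hf : Antitone f) (hf0 : 0 ≤ f)
    (hfc : Tendsto f atTop (𝓝 0)) : DominatedByDilation f (tensorSeq (toC f) (toC f)) := by
  have hf00 : 0 ≤ f 0 := hf0 0
  refine ⟨(f 0)⁻¹ + 1, add_pos_of_nonneg_of_pos (inv_nonneg.2 hf00) one_pos, 1, one_pos,
    fun n => ?_⟩
  have ht0 := tensorSeq_nonneg (toC_mem_c0 hfc) (toC_mem_c0 hfc) n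
  rw [Nat.div_one, add_mul, one_mul]
  rcases hf00.eq_or_lt with h0 | h0
  · rw [← h0, inv_zero, zero_mul, zero_add]
    exact (hf (Nat.zero_le n)).trans (h0 ▸ ht0)
  · have := mul_le_tensorSeq hf hf0 hfc hf0 hfc n
    rw [← le_div_iff₀ h0, div_eq_inv_mul] at this
    linarith

lemma dilationIdeal_mono {g : ℕ → ℝ} (hfg : DominatedByDilation f g) :
    dilationIdeal f ⊆ dilationIdeal g :=
  fun _ hβ => ⟨hβ.1, hβ.2.trans hfg⟩

lemma isStableCalkin_dilationIdeal_iff (hf : Antitone f) (hf0 : 0 ≤ f)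
    (hfc : Tendsto f atTop (𝓝 0)) :
    IsStableCalkin (dilationIdeal f) ↔ DominatedByDilation (tensorSeq (toC f) (toC f)) f := by
  have hc0 := toC_mem_c0 hfc
  have hfI := toC_mem_dilationIdeal hf hf0 hfc
  have hI := isCalkinSpace_dilationIdeal hf hf0
  refine ⟨fun ⟨_, hstable⟩ => ?_, fun htf => ⟨hI, ?_⟩⟩
  · refine (toC_mem_dilationIdeal_iff (antitone_tensorSeq hc0 hc0) (tensorSeq_nonneg hc0 hc0)
      (tendsto_tensorSeq hc0 hc0)).1 ?_
    exact hstable ▸ fun K hK => hK.2 _ hfI _ hfI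
  have htensor : ∀ β ∈ dilationIdeal f, ∀ γ ∈ dilationIdeal f,
      toC (tensorSeq β γ) ∈ dilationIdeal f := fun β hβ γ hγ =>
    (toC_mem_dilationIdeal_iff (antitone_tensorSeq hβ.1 hγ.1) (tensorSeq_nonneg hβ.1 hγ.1)
      (tendsto_tensorSeq hβ.1 hγ.1)).2
      ((hβ.2.tensorSeq hβ.1 hγ.1 hf0 hfc hf0 hfc hγ.2).trans htf)
  refine Set.Subset.antisymm (Set.sInter_subset_of_mem ⟨hI, htensor⟩) fun β hβ K hK => ?_
  exact dilationIdeal_subset hK.1 (antitone_tensorSeq hc0 hc0) (tensorSeq_nonneg hc0 hc0)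
    (tendsto_tensorSeq hc0 hc0) (hK.2 _ hfI _ hfI)
    (dilationIdeal_mono (dominatedByDilation_tensorSeq_self hf hf0 hfc) hβ)

end Stability

section OmegaCounts

variable {ω : ℝ} {α : ℕ → ℝ}

def omegaBlock (ω : ℝ) (α : ℕ → ℝ) (i : ℕ) : Set ℕ := {m | ω ^ (i + 1) < α m ∧ α m ≤ ω ^ i}

lemma Kw_eq_ncard (ω : ℝ) (α : ℕ → ℝ) (i : ℕ) : Kw ω α i = (omegaBlock ω α i).ncard := rfl

lemma Mtil_eq_sum (ω : ℝ) (α : ℕ → ℝ) (n : ℕ) :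
    Mtil ω α n = ∑ i ∈ Finset.range (n + 1), Kw ω α i * Ktil ω α (n - i) := by
  simp only [Mtil, Mw]
  rw [Finset.sum_comm' (t' := Finset.range (n + 1)) (s' := fun i => Finset.Ico i (n + 1))
    fun l i => by simp only [Finset.mem_range, Finset.mem_Ico]; omega]
  refine Finset.sum_congr rfl fun i hi => ?_
  rw [Ktil, Finset.mul_sum, Finset.sum_Ico_eq_sum_range,
    show n + 1 - i = n - i + 1 by have := Finset.mem_range.1 hi; omega]
  simp

lemma Ktil_eq_ncard (hω : ω ∈ Set.Ioo 0 1) (hα1 : ∀ m, α m ≤ 1)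
    (hαc : Tendsto α cofinite (𝓝 0)) (n : ℕ) :
    Ktil ω α n = {m | ω ^ (n + 1) < α m}.ncard := by
  induction n with
  | zero => simp [Ktil, Kw, hα1]
  | succ n ih =>
    have hdisj : Disjoint {m | ω ^ (n + 1) < α m} (omegaBlock ω α (n + 1)) :=
      Set.disjoint_left.2 fun m hm hm' => hm'.2.not_gt hm
    have hunion : {m | ω ^ (n + 1) < α m} ∪ omegaBlock ω α (n + 1) =
        {m | ω ^ (n + 2) < α m} := by
      ext m
      have hpow : ω ^ (n + 2) < ω ^ (n + 1) := pow_lt_pow_right_of_lt_one₀ hω.1 hω.2 (by omega)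
      simp only [omegaBlock, Set.mem_union, Set.mem_ofPred_eq]
      constructor
      · rintro (h | h)
        exacts [hpow.trans h, h.1]
      · intro h
        by_cases h' : ω ^ (n + 1) < α m
        exacts [Or.inl h', Or.inr ⟨h, not_lt.1 h'⟩]
    have hfin : ∀ k, {m | ω ^ k < α m}.Finite := fun k => finite_superlevel hαc (pow_pos hω.1 k)
    rw [Ktil, Finset.sum_range_succ, ← Ktil, ih, Kw_eq_ncard, ← Set.ncard_union_eq hdisj
      (hfin _) ((hfin (n + 2)).subset fun m hm => hm.1), hunion]

lemma superlevel_subset_biUnion_omegaBlock (hω : ω ∈ Set.Ioo 0 1) (hα0 : 0 ≤ α)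
    (hα1 : ∀ m, α m ≤ 1) (n : ℕ) :
    {p : ℕ × ℕ | ω ^ n < α p.1 * α p.2} ⊆
      ⋃ i ∈ Finset.range (n + 1), omegaBlock ω α i ×ˢ {m | ω ^ (n - i + 1) < α m} := by
  rintro ⟨a, b⟩ (hab : ω ^ n < α a * α b)
  have hαa : 0 < α a := pos_of_mul_pos_left ((pow_pos hω.1 n).trans hab) (hα0 b)
  obtain ⟨i, hi, hi'⟩ := exists_nat_pow_near_of_lt_one hαa (hα1 a) hω.1 hω.2
  have hin : i ≤ n := ((pow_lt_pow_iff_right_of_lt_one₀ hω.1 hω.2).1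
    (hab.trans_le ((mul_le_of_le_one_right hαa.le (hα1 b)).trans hi'))).le
  refine Set.mem_biUnion (Finset.mem_range.2 (Nat.lt_succ_of_le hin)) ⟨⟨hi, hi'⟩, ?_⟩
  have hsplit : ω ^ n = ω ^ i * ω ^ (n - i) := by rw [← pow_add, Nat.add_sub_cancel' hin]
  calc ω ^ (n - i + 1) ≤ ω ^ (n - i) := pow_le_pow_of_le_one hω.1.le hω.2.le (Nat.le_succ _)
    _ < α b := by
      by_contra! h
      have := mul_le_mul hi' h (hα0 b) (pow_nonneg hω.1.le i)
      linarith

lemma biUnion_omegaBlock_subset_superlevel (hω : ω ∈ Set.Ioo 0 1) (n : ℕ) :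
    ⋃ i ∈ Finset.range (n + 1), omegaBlock ω α i ×ˢ {m | ω ^ (n - i + 1) < α m} ⊆
      {p : ℕ × ℕ | ω ^ (n + 2) < α p.1 * α p.2} := by
  simp only [Set.subset_def, Set.mem_iUnion, Set.mem_prod, Finset.mem_range]
  rintro ⟨a, b⟩ ⟨i, hi, ⟨ha, -⟩, hb⟩
  have hpow : ω ^ (n + 2) = ω ^ (i + 1) * ω ^ (n - i + 1) := by
    rw [← pow_add]
    congr 1
    omega
  rw [Set.mem_ofPred_eq, hpow]
  exact mul_lt_mul'' ha hb (pow_nonneg hω.1.le _) (pow_nonneg hω.1.le _)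

lemma disjoint_omegaBlock (hω : ω ∈ Set.Ioo 0 1) {i j : ℕ} (hij : i ≠ j) :
    Disjoint (omegaBlock ω α i) (omegaBlock ω α j) := by
  wlog h : i < j generalizing i j
  · exact (this hij.symm (hij.lt_or_gt.resolve_left h)).symm
  exact Set.disjoint_left.2 fun m hi hj =>
    (hj.2.trans (pow_le_pow_of_le_one hω.1.le hω.2.le h)).not_gt hi.1

lemma Mtil_eq_sum_ncard (hω : ω ∈ Set.Ioo 0 1) (hα1 : ∀ m, α m ≤ 1)
    (hαc : Tendsto α cofinite (𝓝 0)) (n : ℕ) :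
    Mtil ω α n = ∑ i ∈ Finset.range (n + 1),
      (omegaBlock ω α i ×ˢ {m | ω ^ (n - i + 1) < α m}).ncard := by
  simp only [Mtil_eq_sum, Set.ncard_prod, Ktil_eq_ncard hω hα1 hαc, Kw_eq_ncard]

lemma finite_omegaBlock_prod_superlevel (hω : ω ∈ Set.Ioo 0 1)
    (hαc : Tendsto α cofinite (𝓝 0)) (i k : ℕ) :
    (omegaBlock ω α i ×ˢ {m | ω ^ k < α m}).Finite :=
  ((finite_superlevel hαc (pow_pos hω.1 _)).subset fun _ hm => hm.1).prod
    (finite_superlevel hαc (pow_pos hω.1 _))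

lemma ncard_superlevel_pairs_le_Mtil (hω : ω ∈ Set.Ioo 0 1) (hα0 : 0 ≤ α)
    (hα1 : ∀ m, α m ≤ 1) (hαc : Tendsto α cofinite (𝓝 0)) (n : ℕ) :
    {p : ℕ × ℕ | ω ^ n < α p.1 * α p.2}.ncard ≤ Mtil ω α n := by
  rw [Mtil_eq_sum_ncard hω hα1 hαc]
  exact (Set.ncard_le_ncard (superlevel_subset_biUnion_omegaBlock hω hα0 hα1 n)
    ((Finset.finite_toSet _).biUnion fun i _ => finite_omegaBlock_prod_superlevel hω hαc i _)).trans
    (Finset.set_ncard_biUnion_le _ _)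

lemma Mtil_le_ncard_superlevel_pairs (hω : ω ∈ Set.Ioo 0 1) (hα1 : ∀ m, α m ≤ 1)
    (hαc : Tendsto α cofinite (𝓝 0)) (n : ℕ) :
    Mtil ω α n ≤ {p : ℕ × ℕ | ω ^ (n + 2) < α p.1 * α p.2}.ncard := by
  have hunion := (Finset.finite_toSet (Finset.range (n + 1))).ncard_biUnion
    (s := fun i => omegaBlock ω α i ×ˢ {m | ω ^ (n - i + 1) < α m})
    (fun i _ => finite_omegaBlock_prod_superlevel hω hαc i _)
    fun i _ j _ hij => Set.disjoint_prod.2 (Or.inl (disjoint_omegaBlock hω hij))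
  simp only [Finset.mem_coe, finsum_mem_finset_eq_sum] at hunion
  rw [Mtil_eq_sum_ncard hω hα1 hαc, ← hunion]
  exact Set.ncard_le_ncard (biUnion_omegaBlock_subset_superlevel hω n)
    (finite_superlevel (tendsto_mul_cofinite hαc hαc) (pow_pos hω.1 _))

end OmegaCounts

section Criterion

variable {ω : ℝ} {α : ℕ → ℝ}

lemma exists_Mtil_le_of_dominatedByDilation (hω : ω ∈ Set.Ioo 0 1) (hα : Antitone α)
    (hα0 : 0 ≤ α) (hαc : Tendsto α atTop (𝓝 0)) (hα1 : ∀ m, α m ≤ 1)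
    (ht : DominatedByDilation (tensorSeq (toC α) (toC α)) α) :
    ∃ r : ℕ, 0 < r ∧ ∃ C : ℝ, 0 < C ∧
      ∀ n : ℕ, (Mtil ω α n : ℝ) ≤ C * (Ktil ω α (n + r) : ℝ) := by
  have hαc' : Tendsto α cofinite (𝓝 0) := Nat.cofinite_eq_atTop ▸ hαc
  set P : ℕ × ℕ → ℝ := fun p => α p.1 * α p.2
  obtain ⟨C, hC, m, hm, ht⟩ := ht
  rw [tensorSeq_toC hα0 hα0] at ht
  obtain ⟨r, hr⟩ := exists_pow_lt_of_lt_one (inv_pos.2 hC) hω.2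
  refine ⟨r + 1, r.succ_pos, m, Nat.cast_pos.2 hm, fun n => ?_⟩
  set K := Ktil ω α (n + (r + 1)) with hKdef
  have hαK : α K ≤ ω ^ (n + 2) * ω ^ r := by
    have hK : K = {j | ω ^ (n + 2) * ω ^ r < α j}.ncard := by
      rw [hKdef, Ktil_eq_ncard hω hα1 hαc', ← pow_add,
        show n + (r + 1) + 1 = n + 2 + r by ring]
    refine not_lt.1 fun hlt => ?_
    exact ((hα.lt_iff_lt_ncard (finite_superlevel hαc' (by have := hω.1; positivity)) K).1
      hlt).ne hK
  have htK : decRearr P (m * K) ≤ ω ^ (n + 2) := by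
    calc decRearr P (m * K) ≤ C * α K := by
          simpa [Nat.mul_div_cancel_left K hm] using ht (m * K)
      _ ≤ C * (ω ^ (n + 2) * ω ^ r) := mul_le_mul_of_nonneg_left hαK hC.le
      _ ≤ ω ^ (n + 2) := by
        have := mul_lt_mul_of_pos_left hr hC
        rw [mul_inv_cancel₀ hC.ne'] at this
        nlinarith [pow_pos hω.1 (n + 2)]
  have hM : Mtil ω α n ≤ m * K :=
    (Mtil_le_ncard_superlevel_pairs hω hα1 hαc' n).trans
      ((decRearr_le_iff (fun p => mul_nonneg (hα0 _) (hα0 _)) (tendsto_mul_cofinite hαc' hαc')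
        (pow_pos hω.1 _) _).1 htK)
  exact_mod_cast hM

lemma dominatedByDilation_of_Mtil_le (hω : ω ∈ Set.Ioo 0 1) (hα : Antitone α) (hα0 : 0 ≤ α)
    (hαc : Tendsto α atTop (𝓝 0)) (hα1 : ∀ m, α m ≤ 1) {r : ℕ} {C : ℝ} (hC : 0 < C)
    (hMK : ∀ n : ℕ, (Mtil ω α n : ℝ) ≤ C * (Ktil ω α (n + r) : ℝ)) :
    DominatedByDilation (tensorSeq (toC α) (toC α)) α := by
  have hαc' : Tendsto α cofinite (𝓝 0) := Nat.cofinite_eq_atTop ▸ hαc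
  set P : ℕ × ℕ → ℝ := fun p => α p.1 * α p.2
  have hP0 : 0 ≤ P := fun p => mul_nonneg (hα0 _) (hα0 _)
  have hP := tendsto_mul_cofinite hαc' hαc'
  have hωr : 0 < ω ^ (r + 2) := pow_pos hω.1 _
  rw [tensorSeq_toC hα0 hα0]
  refine ⟨(ω ^ (r + 2))⁻¹, inv_pos.2 hωr, ⌈C⌉₊, Nat.ceil_pos.2 hC, fun n => ?_⟩
  rcases (decRearr_nonneg hP0 hP n).eq_or_lt with h0 | hpos
  · rw [← h0]
    exact mul_nonneg (inv_nonneg.2 hωr.le) (hα0 _)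
  have hP1 : {p | 1 < P p} = ∅ := Set.eq_empty_of_forall_notMem fun p hp =>
    hp.not_ge (mul_le_one₀ (hα1 _) (hα0 _) (hα1 _))
  have ht1 : decRearr P n ≤ 1 := (decRearr_le_iff hP0 hP one_pos n).2 (by simp [hP1])
  obtain ⟨l, hl, hl'⟩ := exists_nat_pow_near_of_lt_one hpos ht1 hω.1 hω.2
  have hn : n < {p | ω ^ (l + 1) < P p}.ncard :=
    lt_of_not_ge fun h => hl.not_ge ((decRearr_le_iff hP0 hP (pow_pos hω.1 _) n).2 h)
  have hnK : (n : ℝ) < ⌈C⌉₊ * Ktil ω α (l + 1 + r) :=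
    calc (n : ℝ) < {p | ω ^ (l + 1) < P p}.ncard := by exact_mod_cast hn
      _ ≤ Mtil ω α (l + 1) := by
        exact_mod_cast ncard_superlevel_pairs_le_Mtil hω hα0 hα1 hαc' (l + 1)
      _ ≤ C * Ktil ω α (l + 1 + r) := hMK (l + 1)
      _ ≤ ⌈C⌉₊ * Ktil ω α (l + 1 + r) :=
        mul_le_mul_of_nonneg_right (Nat.le_ceil C) (Nat.cast_nonneg _)
  have hdiv : n / ⌈C⌉₊ < {j | ω ^ (l + 1 + r + 1) < α j}.ncard := by
    rw [← Ktil_eq_ncard hω hα1 hαc']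
    exact Nat.div_lt_of_lt_mul (by exact_mod_cast hnK)
  have hαn := (hα.lt_iff_lt_ncard (finite_superlevel hαc' (pow_pos hω.1 _)) _).2 hdiv
  calc decRearr P n ≤ ω ^ l := hl'
    _ = (ω ^ (r + 2))⁻¹ * ω ^ (l + 1 + r + 1) := by
      rw [eq_inv_mul_iff_mul_eq₀ hωr.ne', ← pow_add]
      ring_nf
    _ ≤ (ω ^ (r + 2))⁻¹ * α (n / ⌈C⌉₊) :=
      mul_le_mul_of_nonneg_left hαn.le (inv_nonneg.2 hωr.le)

end Criterion

/-- Let `α` be a nonincreasing null sequence of nonnegative reals with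
`α₁ ≤ 1` and `ω ∈ (0,1)`.  The following are equivalent: (1) the principal Calkin space
`⟨α⟩` is stable; (2) `α⊗α ∈ ⟨α⟩`; (3) there are `r ≥ 1` and `C > 0` with
`M̃ₙ^{(ω)}(α) ≤ C K̃_{n+r}^{(ω)}(α)` for every `n ≥ 0`. -/
theorem principal_stable_iff (ω : ℝ) (hω : ω ∈ Set.Ioo (0 : ℝ) 1) (α : ℕ → ℝ)
    (hαa : Antitone α) (hα0 : ∀ n, 0 ≤ α n)
    (hαc : Filter.Tendsto α Filter.atTop (nhds 0)) (hα1 : α 0 ≤ 1) :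
    (IsStableCalkin (principalCalkin (toC α)) ↔
        toC (tensorSeq (toC α) (toC α)) ∈ principalCalkin (toC α)) ∧
    (IsStableCalkin (principalCalkin (toC α)) ↔
        ∃ r : ℕ, 0 < r ∧ ∃ C : ℝ, 0 < C ∧
          ∀ n : ℕ, (Mtil ω α n : ℝ) ≤ C * (Ktil ω α (n + r) : ℝ)) := by
  have hc0 := toC_mem_c0 hαc
  have hstable : IsStableCalkin (principalCalkin (toC α)) ↔
      DominatedByDilation (tensorSeq (toC α) (toC α)) α := by
    rw [principalCalkin_eq_dilationIdeal hαa hα0 hαc]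
    exact isStableCalkin_dilationIdeal_iff hαa hα0 hαc
  have hmem : toC (tensorSeq (toC α) (toC α)) ∈ principalCalkin (toC α) ↔
      DominatedByDilation (tensorSeq (toC α) (toC α)) α := by
    rw [principalCalkin_eq_dilationIdeal hαa hα0 hαc]
    exact toC_mem_dilationIdeal_iff (antitone_tensorSeq hc0 hc0) (tensorSeq_nonneg hc0 hc0)
      (tendsto_tensorSeq hc0 hc0)
  have hα1' : ∀ m, α m ≤ 1 := fun m => (hαa (Nat.zero_le m)).trans hα1
  refine ⟨hstable.trans hmem.symm, hstable.trans ⟨?_, ?_⟩⟩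
  · exact exists_Mtil_le_of_dominatedByDilation hω hαa hα0 hαc hα1'
  · rintro ⟨r, -, C, hC, hMK⟩
    exact dominatedByDilation_of_Mtil_le hω hαa hα0 hαc hα1' hC hMK
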